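/- Let G act transitively on a symplectic manifold (M,Ω) with an injective equivariant moment map J: M → g*. Then J is a bijection from M onto a single coadjoint orbit of G in g*, and J pulls back the Kostant–Kirillov–Souriau symplectic form on that orbit to Ω. -/
import Mathlib


/-- **Injective equivariant moment maps identify transitive Hamiltonian spaces with
coadjoint orbits.**  Let a group `G` with Lie algebra `𝔤` act transitively on a
symplectic manifold `(M, Ω)`; since the action is transitive, tangent vectors are values
of fundamental vector fields `ζ_X`, and the symplectic form is recorded through
`Ω x X Y := Ω_x(ζ_X(x), ζ_Y(x))` (skew in `X, Y`).  Let `coad` be the coadjoint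
representation of `G` on `𝔤*`, and let `J : M → 𝔤*` be injective and equivariant.
One-parameter subgroups `e X : ℝ → G` generate the action, the moment map condition
`d⟨J, Y⟩ = i_{ζ_Y} Ω` reads `(d/dt)|₀ ⟨J(e X t • x), Y⟩ = Ω x X Y`, and the
derivative of the coadjoint action is the infinitesimal coadjoint action
`(d/dt)|₀ ⟨Ad*_{e X t} ξ, Y⟩ = ⟨ξ, [X,Y]⟩`.  Then `J` maps `M` bijectively onto a
single coadjoint orbit (for any base point `x₀`, the range of `J` is the coadjoint
orbit of `J x₀`), and `J` pulls the Kostant–Kirillov–Souriau form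
`ω_KKS(ad*_X ξ, ad*_Y ξ) = ⟨ξ, [X,Y]⟩` back to `Ω`, i.e. `Ω x X Y = ⟨J x, [X,Y]⟩`. -/
theorem moment_map_bijects_onto_coadjoint_orbit
    {G M 𝔤 : Type*} [Group G] [MulAction G M]
    [LieRing 𝔤] [LieAlgebra ℝ 𝔤]
    (htrans : ∀ x y : M, ∃ g : G, g • x = y)
    (Ω : M → 𝔤 → 𝔤 → ℝ)
    (hskew : ∀ x X Y, Ω x X Y = -Ω x Y X)
    (coad : Representation ℝ G (Module.Dual ℝ 𝔤))
    (J : M → Module.Dual ℝ 𝔤)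
    (hinj : Function.Injective J)
    (hequiv : ∀ (g : G) (x : M), J (g • x) = coad g (J x))
    (e : 𝔤 → ℝ → G)
    (he0 : ∀ X, e X 0 = 1)
    (headd : ∀ X s t, e X (s + t) = e X s * e X t)
    (hmoment : ∀ (x : M) (X Y : 𝔤),
      HasDerivAt (fun t : ℝ => J (e X t • x) Y) (Ω x X Y) 0)
    (hcoadderiv : ∀ (ξ : Module.Dual ℝ 𝔤) (X Y : 𝔤),
      HasDerivAt (fun t : ℝ => coad (e X t) ξ Y) (ξ ⁅X, Y⁆) 0) :
    (∀ x₀ : M, Set.range J = Set.range fun g : G => coad g (J x₀)) ∧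
    (∀ (x : M) (X Y : 𝔤), Ω x X Y = J x ⁅X, Y⁆) := by
  constructor
  · intro x₀
    ext ξ
    constructor
    · rintro ⟨x, rfl⟩
      obtain ⟨g, rfl⟩ := htrans x₀ x
      exact ⟨g, (hequiv g x₀).symm⟩
    · rintro ⟨g, rfl⟩
      exact ⟨g • x₀, hequiv g x₀⟩
  · intro x X Y
    have h1 := hmoment x X Y
    have h2 : HasDerivAt (fun t : ℝ => J (e X t • x) Y) (J x ⁅X, Y⁆) 0 := by
      have := hcoadderiv (J x) X Y
      simpa [hequiv] using this
    exact h1.unique h2
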